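/- arXiv:2109.10528 — 6 statements merged into one kernel-verified Lean document; each statement's English description precedes it below -/
import Mathlib

section
/- Let σ > 0, Δ > 0, ε ≥ 0, and let μ, μ' ∈ ℝ satisfy |μ − μ'| ≤ Δ. Set ψ = Δ/σ. Then for every measurable set S ⊆ ℝ, the Gaussian measures P = N(μ, σ²) and Q = N(μ', σ²) satisfy P(S) ≤ e^ε · Q(S) + Φ(ψ/2 − ε/ψ). In particular, the Gaussian mechanism with noise standard deviation σ on a query of L2-sensitivity Δ is (ε, δ)-differentially private with δ = Φ(ψ/2 − ε/ψ). -/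
/-!
The privacy loss `L = log (p / q)` of `P = N(μ, σ²)` against `Q = N(μ', σ²)` is an affine
function of the output, so under `P` it has law `N(t² / 2, t²)` with `t = (μ - μ') / σ`.
Off the event `{L > ε}` the density of `P` is at most `e^ε` times that of `Q`, whence
`P S ≤ e^ε Q S + P {L > ε}`, and `P {L > ε} = Φ(|t| / 2 - ε / |t|)`, which grows with
`|t| ≤ ψ`.
-/

open MeasureTheory ProbabilityTheory Real

/-- `Φ`, the cumulative distribution function of the standard normal distribution. -/
noncomputable def stdNormalCDF (x : ℝ) : ℝ := ((gaussianReal 0 1) (Set.Iic x)).toReal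

open Set
open scoped ENNReal

lemma withDensity_le_mul_add_withDensity {α : Type*} [MeasurableSpace α] {ν : Measure α}
    [SFinite ν] {f g : α → ℝ≥0∞} (hg : Measurable g) {c : ℝ≥0∞} {B : Set α}
    (hfg : ∀ x ∉ B, f x ≤ c * g x) (S : Set α) :
    ν.withDensity f S ≤ c * ν.withDensity g S + ν.withDensity f B := by
  have h_diff : ν.withDensity f (S \ B) ≤ c * ν.withDensity g S := by
    rw [withDensity_apply' _, withDensity_apply' _, ← lintegral_const_mul _ hg]
    calc ∫⁻ x in S \ B, f x ∂ν ≤ ∫⁻ x in S \ B, c * g x ∂ν :=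
          setLIntegral_mono (hg.const_mul c) fun x hx => hfg x hx.2
      _ ≤ ∫⁻ x in S, c * g x ∂ν := lintegral_mono_set sdiff_subset
  calc ν.withDensity f S ≤ ν.withDensity f (S \ B) + ν.withDensity f B :=
        (measure_mono (subset_sdiff_union S B)).trans (measure_union_le _ _)
    _ ≤ c * ν.withDensity g S + ν.withDensity f B := by gcongr

lemma monotone_stdNormalCDF : Monotone stdNormalCDF := fun _ _ h =>
  ENNReal.toReal_mono (measure_ne_top _ _) (measure_mono (Iic_subset_Iic.2 h))

lemma gaussianReal_Ioi {σ : ℝ} (hσ : 0 < σ) (m c : ℝ) :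
    gaussianReal m (.mk (σ ^ 2) (sq_nonneg σ)) (Ioi c)
      = ENNReal.ofReal (stdNormalCDF ((m - c) / σ)) := by
  have hlaw : HasLaw (fun z => m - σ * z) (gaussianReal m (.mk (σ ^ 2) (sq_nonneg σ)))
      (gaussianReal 0 1) := by
    convert gaussianReal_const_sub (gaussianReal_const_mul HasLaw.id σ) m using 2
    · rfl
    · simp
    · rw [mul_one]
  have hpre : {z : ℝ | c < m - σ * z} = Iio ((m - c) / σ) := by
    ext z
    rw [mem_ofPred_eq, mem_Iio, lt_div_iff₀ hσ]
    constructor <;> intro <;> linarith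
  have hatom : gaussianReal 0 1 {(m - c) / σ} = 0 :=
    (nullSingletonClass_gaussianReal one_ne_zero).measure_singleton _
  rw [stdNormalCDF, ENNReal.ofReal_toReal (measure_ne_top _ _),
    ← measure_congr (Iio_ae_eq_Iic' hatom), ← hpre]
  exact (hlaw.measure_eq measurableSet_Ioi).symm

lemma monotoneOn_half_sub_div {ε : ℝ} (hε : 0 ≤ ε) :
    MonotoneOn (fun t : ℝ => t / 2 - ε / t) (Ioi 0) := fun s hs t _ hst => by
  have := div_le_div_of_nonneg_left hε (mem_Ioi.1 hs) hst
  dsimp only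
  linarith

/-- The privacy loss `log (p / q)` of `N(μ, σ²)` against `N(μ', σ²)` at the output `x`. -/
noncomputable def gaussianPrivacyLoss (μ μ' σ x : ℝ) : ℝ :=
  ((x - μ') ^ 2 - (x - μ) ^ 2) / (2 * σ ^ 2)

lemma gaussianPDFReal_eq_exp_gaussianPrivacyLoss_mul (μ μ' σ x : ℝ) :
    gaussianPDFReal μ (.mk (σ ^ 2) (sq_nonneg σ)) x
      = exp (gaussianPrivacyLoss μ μ' σ x) * gaussianPDFReal μ' (.mk (σ ^ 2) (sq_nonneg σ)) x := by
  simp only [gaussianPDFReal, gaussianPrivacyLoss, NNReal.coe_mk]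
  rw [mul_left_comm, ← exp_add]
  congr 2
  ring

lemma gaussianPDF_le_ofReal_exp_mul {μ μ' σ ε x : ℝ} (h : gaussianPrivacyLoss μ μ' σ x ≤ ε) :
    gaussianPDF μ (.mk (σ ^ 2) (sq_nonneg σ)) x
      ≤ ENNReal.ofReal (exp ε) * gaussianPDF μ' (.mk (σ ^ 2) (sq_nonneg σ)) x := by
  simp only [gaussianPDF_def]
  rw [← ENNReal.ofReal_mul (exp_pos ε).le, gaussianPDFReal_eq_exp_gaussianPrivacyLoss_mul μ μ']
  gcongr
  exact gaussianPDFReal_nonneg _ _ _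

lemma hasLaw_gaussianPrivacyLoss {σ : ℝ} (hσ : σ ≠ 0) (μ μ' : ℝ) :
    HasLaw (gaussianPrivacyLoss μ μ' σ)
      (gaussianReal (((μ - μ') / σ) ^ 2 / 2) (.mk (((μ - μ') / σ) ^ 2) (sq_nonneg _)))
      (gaussianReal μ (.mk (σ ^ 2) (sq_nonneg σ))) := by
  convert gaussianReal_add_const (gaussianReal_const_mul HasLaw.id ((μ - μ') / σ ^ 2))
    ((μ' ^ 2 - μ ^ 2) / (2 * σ ^ 2)) using 2
  · simp only [gaussianPrivacyLoss, id]
    field_simp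
    ring
  · field_simp
    ring
  · apply NNReal.eq
    simp only [NNReal.coe_mul, NNReal.coe_mk]
    field_simp

lemma gaussianReal_lt_gaussianPrivacyLoss_le {μ μ' σ ε ψ : ℝ} (hσ : 0 < σ) (hε : 0 ≤ ε)
    (hψ : 0 < ψ) (h : |μ - μ'| / σ ≤ ψ) :
    gaussianReal μ (.mk (σ ^ 2) (sq_nonneg σ)) {x | ε < gaussianPrivacyLoss μ μ' σ x}
      ≤ ENNReal.ofReal (stdNormalCDF (ψ / 2 - ε / ψ)) := by
  rw [(hasLaw_gaussianPrivacyLoss hσ.ne' μ μ').measure_eq measurableSet_Ioi]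
  set t := (μ - μ') / σ
  rcases eq_or_ne t 0 with ht | ht
  · simp [ht, hε.not_gt]
  have ht' : 0 < |t| := abs_pos.2 ht
  have hvar : NNReal.mk (t ^ 2) (sq_nonneg t) = .mk (|t| ^ 2) (sq_nonneg _) := by simp
  rw [hvar, ← sq_abs, Ioi_def, gaussianReal_Ioi ht']
  refine ENNReal.ofReal_le_ofReal (monotone_stdNormalCDF ?_)
  calc (|t| ^ 2 / 2 - ε) / |t| = |t| / 2 - ε / |t| := by field_simp
    _ ≤ ψ / 2 - ε / ψ := monotoneOn_half_sub_div hε ht' hψ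
        (by rwa [abs_div, abs_of_pos hσ])

/-- for `σ > 0`, `Δ > 0`, `ε ≥ 0`, `|μ − μ'| ≤ Δ` and `ψ = Δ/σ`,
the Gaussian measures `P = N(μ, σ²)` and `Q = N(μ', σ²)` satisfy, for every
measurable `S ⊆ ℝ`, `P(S) ≤ e^ε · Q(S) + Φ(ψ/2 − ε/ψ)`: the Gaussian mechanism is
`(ε, δ)`-DP with `δ = Φ(ψ/2 − ε/ψ)`. -/
theorem gaussian_mechanism_eps_delta (σ Δ ε μ μ' ψ : ℝ) (hσ : 0 < σ) (hΔ : 0 < Δ)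
    (hε : 0 ≤ ε) (hadj : |μ - μ'| ≤ Δ) (hψ : ψ = Δ / σ) :
    ∀ S : Set ℝ, MeasurableSet S →
      (gaussianReal μ ⟨σ ^ 2, sq_nonneg σ⟩) S ≤
        ENNReal.ofReal (Real.exp ε) * (gaussianReal μ' ⟨σ ^ 2, sq_nonneg σ⟩) S +
          ENNReal.ofReal (stdNormalCDF (ψ / 2 - ε / ψ)) := by
  intro S _
  have hv : NNReal.mk (σ ^ 2) (sq_nonneg σ) ≠ 0 := by
    rw [Ne, ← NNReal.coe_eq_zero, NNReal.coe_mk]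
    positivity
  calc gaussianReal μ (.mk (σ ^ 2) (sq_nonneg σ)) S
      ≤ ENNReal.ofReal (exp ε) * gaussianReal μ' (.mk (σ ^ 2) (sq_nonneg σ)) S
        + gaussianReal μ (.mk (σ ^ 2) (sq_nonneg σ)) {x | ε < gaussianPrivacyLoss μ μ' σ x} := by
        simp only [gaussianReal_of_var_ne_zero _ hv]
        exact withDensity_le_mul_add_withDensity (measurable_gaussianPDF _ _)
          (fun x hx => gaussianPDF_le_ofReal_exp_mul (not_lt.1 hx)) S
    _ ≤ _ := add_le_add_right (gaussianReal_lt_gaussianPrivacyLoss_le hσ hε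
          (hψ ▸ div_pos hΔ hσ) (hψ ▸ div_le_div_of_nonneg_right hadj hσ.le)) _
end

section
/- Let a ∈ ℝ and b > 0. Then ∫₀¹ Φ(a + b·Φ⁻¹(t)) dt = Φ(a/√(1 + b²)); that is, the area under the binormal ROC curve ROC(t) = Φ(a + b·Φ⁻¹(t)) equals Φ(a/√(1+b²)). -/
/-!
Substituting `t = Φ x` turns the area into `𝔼[Φ(a + bX)]` for `X ~ N(0,1)`. For an independent
`Y ~ N(0,1)` this is `P(Y - bX ≤ a)`, the value at `a` of the CDF of the convolution of
`N(0, b²)` with `N(0, 1)`, and that convolution is `N(0, 1 + b²)`.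
-/

open MeasureTheory ProbabilityTheory Real

/-- `Φ⁻¹`, the standard normal quantile function (inverse of `Φ`). -/
noncomputable def stdNormalCDFInv : ℝ → ℝ := Function.invFun stdNormalCDF

open Set NNReal

lemma ProbabilityTheory.cdf_conv (μ ν : Measure ℝ) [IsProbabilityMeasure μ]
    [IsProbabilityMeasure ν] (a : ℝ) :
    cdf (μ ∗ ν) a = ∫ x, cdf ν (a - x) ∂μ := by
  have hmeas : Measurable fun x => ν (Iic (a - x)) :=
    Antitone.measurable fun x y hxy => measure_mono (Iic_subset_Iic.2 (by linarith))
  simp_rw [cdf_eq_real, measureReal_def]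
  rw [integral_toReal hmeas.aemeasurable (ae_of_all _ fun x => measure_lt_top _ _), Measure.conv,
    Measure.map_apply (by fun_prop) measurableSet_Iic,
    Measure.prod_apply (measurableSet_Iic.preimage (by fun_prop))]
  congr 3 with x
  congr 1 with y
  simp [le_sub_iff_add_le']

lemma continuous_gaussianPDFReal (μ : ℝ) (v : ℝ≥0) : Continuous (gaussianPDFReal μ v) := by
  unfold gaussianPDFReal; fun_prop

lemma stdNormalCDF_eq_cdf : stdNormalCDF = cdf (gaussianReal 0 1) := by
  ext x; rw [cdf_eq_real, measureReal_def, stdNormalCDF]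

lemma hasDerivAt_stdNormalCDF (x : ℝ) : HasDerivAt stdNormalCDF (gaussianPDFReal 0 1 x) x := by
  have hφ := integrable_gaussianPDFReal 0 1
  have hFTC : ∀ y, stdNormalCDF y = stdNormalCDF 0 + ∫ t in (0 : ℝ)..y, gaussianPDFReal 0 1 t := by
    intro y
    have hnonneg (z : ℝ) : 0 ≤ ∫ t in Iic z, gaussianPDFReal 0 1 t :=
      setIntegral_nonneg measurableSet_Iic fun t _ => gaussianPDFReal_nonneg 0 1 t
    simp only [stdNormalCDF, gaussianReal_apply_eq_integral 0 one_ne_zero,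
      ENNReal.toReal_ofReal (hnonneg _)]
    rw [← intervalIntegral.integral_Iic_sub_Iic hφ.integrableOn hφ.integrableOn]
    ring
  rw [funext hFTC]
  exact ((continuous_gaussianPDFReal 0 1).integral_hasStrictDerivAt 0 x).hasDerivAt.const_add _

lemma stdNormalCDF_strictMono : StrictMono stdNormalCDF :=
  strictMono_of_hasDerivAt_pos hasDerivAt_stdNormalCDF fun x =>
    gaussianPDFReal_pos 0 1 x one_ne_zero

lemma range_stdNormalCDF : range stdNormalCDF = Ioo 0 1 := by
  have hcont : Continuous stdNormalCDF :=
    continuous_iff_continuousAt.2 fun x => (hasDerivAt_stdNormalCDF x).continuousAt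
  refine Subset.antisymm ?_ fun t ht => ?_
  · rintro _ ⟨x, rfl⟩
    have h0 := stdNormalCDF_eq_cdf ▸ cdf_nonneg (gaussianReal 0 1) (x - 1)
    have h1 := stdNormalCDF_eq_cdf ▸ cdf_le_one (gaussianReal 0 1) (x + 1)
    exact ⟨h0.trans_lt (stdNormalCDF_strictMono (by linarith)),
      (stdNormalCDF_strictMono (by linarith)).trans_le h1⟩
  · rw [stdNormalCDF_eq_cdf] at hcont ⊢
    exact mem_range_of_exists_le_of_exists_ge hcont
        ((tendsto_cdf_atBot _).eventually (eventually_le_nhds ht.1)).exists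
        ((tendsto_cdf_atTop _).eventually (eventually_ge_nhds ht.2)).exists

lemma integral_Ioo_comp_stdNormalCDFInv {E : Type*} [NormedAddCommGroup E] [NormedSpace ℝ E]
    (g : ℝ → E) : ∫ t in Ioo 0 1, g (stdNormalCDFInv t) = ∫ x, g x ∂gaussianReal 0 1 := by
  have h := integral_image_eq_integral_abs_deriv_smul MeasurableSet.univ
    (fun x _ => (hasDerivAt_stdNormalCDF x).hasDerivWithinAt)
    stdNormalCDF_strictMono.injective.injOn fun t => g (stdNormalCDFInv t)
  rw [image_univ, range_stdNormalCDF, Measure.restrict_univ] at h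
  rw [h, integral_gaussianReal_eq_integral_smul one_ne_zero]
  congr with x
  rw [abs_of_pos (gaussianPDFReal_pos 0 1 x one_ne_zero), stdNormalCDFInv,
    Function.leftInverse_invFun stdNormalCDF_strictMono.injective]

lemma cdf_gaussianReal (μ : ℝ) {v : ℝ≥0} (hv : v ≠ 0) (x : ℝ) :
    cdf (gaussianReal μ v) x = stdNormalCDF ((x - μ) / √v) := by
  have hσ : 0 < √(v : ℝ) := Real.sqrt_pos.2 (by positivity)
  have hmap : gaussianReal μ v = (gaussianReal 0 1).map ((· + μ) ∘ (√v * ·)) := by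
    rw [← Measure.map_map (by fun_prop) (by fun_prop), gaussianReal_map_const_mul,
      gaussianReal_map_add_const]
    congr
    · ring
    · ext; simp [Real.sq_sqrt v.coe_nonneg]
  rw [cdf_eq_real, measureReal_def, hmap, Measure.map_apply (by fun_prop) measurableSet_Iic,
    stdNormalCDF]
  congr 3 with y
  simp [le_div_iff₀ hσ, le_sub_iff_add_le, mul_comm]

theorem binormal_auc_general (a b : ℝ) :
    ∫ t in Set.Ioo (0 : ℝ) 1, stdNormalCDF (a + b * stdNormalCDFInv t) =
      stdNormalCDF (a / Real.sqrt (1 + b ^ 2)) := by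
  let v : ℝ≥0 := ⟨b ^ 2, sq_nonneg b⟩
  have hv : (v : ℝ) = b ^ 2 := rfl
  have hscale : (gaussianReal 0 1).map (-b * ·) = gaussianReal 0 v := by
    rw [gaussianReal_map_const_mul]
    congr
    · ring
    · ext; simp [hv]
  calc ∫ t in Ioo (0 : ℝ) 1, stdNormalCDF (a + b * stdNormalCDFInv t)
      = ∫ x, cdf (gaussianReal 0 1) (a - -b * x) ∂gaussianReal 0 1 := by
        rw [integral_Ioo_comp_stdNormalCDFInv fun x => stdNormalCDF (a + b * x)]
        simp only [stdNormalCDF_eq_cdf, neg_mul, sub_neg_eq_add]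
    _ = ∫ y, cdf (gaussianReal 0 1) (a - y) ∂gaussianReal 0 v := by
        rw [← hscale, integral_map (by fun_prop)]
        exact ((cdf _).mono.measurable.comp (by fun_prop)).aestronglyMeasurable
    _ = cdf (gaussianReal 0 v ∗ gaussianReal 0 1) a := (cdf_conv _ _ a).symm
    _ = stdNormalCDF (a / √(1 + b ^ 2)) := by
        rw [gaussianReal_conv_gaussianReal, cdf_gaussianReal _ (by positivity)]
        simp [hv, add_comm]

/-- the area under the binormal ROC curve
`ROC(t) = Φ(a + b·Φ⁻¹(t))` on `(0,1)` equals `Φ(a/√(1 + b²))`. -/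
theorem binormal_auc (a b : ℝ) (hb : 0 < b) :
    ∫ t in Set.Ioo (0 : ℝ) 1, stdNormalCDF (a + b * stdNormalCDFInv t) =
      stdNormalCDF (a / Real.sqrt (1 + b ^ 2)) :=
  binormal_auc_general a b
end

section
/- Let σ > 0, Δ > 0, α > 1, δ ∈ (0,1), and let μ, μ' ∈ ℝ with |μ − μ'| ≤ Δ. Set ψ = Δ/σ and ε = (α/2)·ψ² + log(1/δ)/(α−1). Then for every measurable set S ⊆ ℝ, the Gaussian measures P = N(μ, σ²) and Q = N(μ', σ²) satisfy P(S) ≤ e^ε · Q(S) + δ; i.e., the Gaussian mechanism with sensitivity index ψ, which satisfies (α, (α/2)ψ²)-Rényi DP, satisfies ((α/2)ψ² + log(1/δ)/(α−1), δ)-differential privacy. -/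
/-!
Pointwise, the density of `N(μ, σ²)` is at most `e^ε` times that of `N(μ', σ²)` wherever the
privacy loss `log (p/q)` is at most `ε`. On the remaining half-line it is at most `δ` times the
density of the shifted Gaussian `N(μ + t (μ - μ'), σ²)`, for a suitable `t ≥ 0`. Integrating
`p ≤ e^ε q + δ r` over `S` and using `r(S) ≤ 1` gives the claim. Optimizing over `t` makes the
requirement on `ε` exactly `(α/2) ψ² + log(1/δ)/(α-1)`.
-/

open MeasureTheory ProbabilityTheory Real

open scoped NNReal ENNReal

theorem MeasureTheory.withDensity_le_smul_add_smul {α : Type*} [MeasurableSpace α]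
    {ν : Measure α} {f g h : α → ℝ≥0∞} {a b : ℝ≥0∞} (hg : Measurable g) (hh : Measurable h)
    (hfgh : ∀ x, f x ≤ a * g x + b * h x) :
    ν.withDensity f ≤ a • ν.withDensity g + b • ν.withDensity h := by
  rw [← withDensity_smul a hg, ← withDensity_smul b hh, ← withDensity_add_left (hg.const_smul a)]
  exact withDensity_mono (ae_of_all _ hfgh)

namespace ProbabilityTheory

theorem gaussianPDFReal_le_exp_mul {μ μ' r x : ℝ} {v : ℝ≥0}
    (h : (x - μ') ^ 2 - (x - μ) ^ 2 ≤ 2 * v * r) :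
    gaussianPDFReal μ v x ≤ exp r * gaussianPDFReal μ' v x := by
  rcases eq_zero_or_pos v with rfl | hv
  · simp
  have hv' : (0 : ℝ) < v := hv
  rw [gaussianPDFReal, gaussianPDFReal, mul_left_comm, ← exp_add]
  gcongr
  rw [← sub_nonneg]
  have hgap : r + -(x - μ') ^ 2 / (2 * v) - -(x - μ) ^ 2 / (2 * v)
      = (2 * v * r - ((x - μ') ^ 2 - (x - μ) ^ 2)) / (2 * v) := by
    field_simp
    ring
  rw [hgap]
  exact div_nonneg (by linarith) (by positivity)

theorem gaussianPDFReal_le_exp_mul_add_exp_mul {μ μ' ε L t x : ℝ} {v : ℝ≥0} (ht : 0 ≤ t)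
    (h : (t + t ^ 2) * (μ - μ') ^ 2 + 2 * v * L ≤ 2 * t * v * ε) :
    gaussianPDFReal μ v x ≤
      exp ε * gaussianPDFReal μ' v x + exp (-L) * gaussianPDFReal (μ + t * (μ - μ')) v x := by
  have hq := gaussianPDFReal_nonneg μ' v x
  have hr := gaussianPDFReal_nonneg (μ + t * (μ - μ')) v x
  rcases le_or_gt ((x - μ') ^ 2 - (x - μ) ^ 2) (2 * v * ε) with hloss | hloss
  · exact (gaussianPDFReal_le_exp_mul hloss).trans (le_add_of_nonneg_right (by positivity))
  · refine (gaussianPDFReal_le_exp_mul ?_).trans (le_add_of_nonneg_left (by positivity))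
    linarith [mul_le_mul_of_nonneg_left hloss.le ht]

theorem gaussianReal_le_exp_smul_add_exp_smul {μ μ' ε L t : ℝ} {v : ℝ≥0} (hv : v ≠ 0)
    (ht : 0 ≤ t) (h : (t + t ^ 2) * (μ - μ') ^ 2 + 2 * v * L ≤ 2 * t * v * ε) :
    gaussianReal μ v ≤ ENNReal.ofReal (exp ε) • gaussianReal μ' v +
      ENNReal.ofReal (exp (-L)) • gaussianReal (μ + t * (μ - μ')) v := by
  simp only [gaussianReal_of_var_ne_zero _ hv]
  refine withDensity_le_smul_add_smul (measurable_gaussianPDF _ _) (measurable_gaussianPDF _ _)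
    fun x ↦ ?_
  have hq := gaussianPDFReal_nonneg μ' v x
  have hr := gaussianPDFReal_nonneg (μ + t * (μ - μ')) v x
  simp only [gaussianPDF, ← ENNReal.ofReal_mul (exp_nonneg _)]
  rw [← ENNReal.ofReal_add (by positivity) (by positivity)]
  exact ENNReal.ofReal_le_ofReal (gaussianPDFReal_le_exp_mul_add_exp_mul ht h)

end ProbabilityTheory

/- The gap is `(a² p - 2 L)² / (4 a² p)`: this `t` maximizes the right side minus the left side,
a concave quadratic in `t`. -/
theorem add_sq_mul_add_two_mul_le_of_eq {a p L t : ℝ} (ha : 0 < a) (hp : 0 < p)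
    (ht : t = a / 2 + L / (a * p)) :
    (t + t ^ 2) * p + 2 * L ≤ 2 * t * ((a + 1) / 2 * p + L / a) := by
  rw [← sub_nonneg]
  have hgap : 2 * t * ((a + 1) / 2 * p + L / a) - ((t + t ^ 2) * p + 2 * L)
      = (a ^ 2 * p - 2 * L) ^ 2 / (4 * a ^ 2 * p) := by
    subst ht
    field_simp
    ring
  rw [hgap]
  positivity

/-- standard RDP-to-DP conversion for the Gaussian mechanism. For
`σ > 0`, `Δ > 0`, `α > 1`, `δ ∈ (0,1)`, `|μ − μ'| ≤ Δ`, `ψ = Δ/σ` and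
`ε = (α/2)ψ² + log(1/δ)/(α−1)`, the measures `P = N(μ, σ²)`, `Q = N(μ', σ²)` satisfy
`P(S) ≤ e^ε·Q(S) + δ` for every measurable `S`. -/
theorem gaussian_mechanism_rdp_to_dp_standard (σ Δ α δ μ μ' ψ ε : ℝ)
    (hσ : 0 < σ) (hΔ : 0 < Δ) (hα : 1 < α) (hδ : δ ∈ Set.Ioo (0 : ℝ) 1)
    (hadj : |μ - μ'| ≤ Δ) (hψ : ψ = Δ / σ)
    (hε : ε = α / 2 * ψ ^ 2 + Real.log (1 / δ) / (α - 1)) :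
    ∀ S : Set ℝ, MeasurableSet S →
      (gaussianReal μ ⟨σ ^ 2, sq_nonneg σ⟩) S ≤
        ENNReal.ofReal (Real.exp ε) * (gaussianReal μ' ⟨σ ^ 2, sq_nonneg σ⟩) S +
          ENNReal.ofReal δ := by
  intro S _
  obtain ⟨hδ0, hδ1⟩ := hδ
  set L := log (1 / δ)
  have hL : 0 ≤ L := log_nonneg (one_le_one_div hδ0 hδ1.le)
  have hδL : exp (-L) = δ := by simp only [L, one_div, log_inv, neg_neg, exp_log hδ0]
  have hψ2 : 0 < ψ ^ 2 := by rw [hψ]; positivity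
  have hsens : (μ - μ') ^ 2 ≤ σ ^ 2 * ψ ^ 2 := by
    rw [← mul_pow, hψ, mul_div_cancel₀ _ hσ.ne', ← sq_abs]
    exact pow_le_pow_left₀ (abs_nonneg _) hadj 2
  have ha : 0 < α - 1 := sub_pos.2 hα
  set t := (α - 1) / 2 + L / ((α - 1) * ψ ^ 2)
  have ht : 0 ≤ t := by positivity
  have hshift := add_sq_mul_add_two_mul_le_of_eq (t := t) ha hψ2 rfl
  rw [sub_add_cancel] at hshift
  have hcond : (t + t ^ 2) * (μ - μ') ^ 2 + 2 * (σ ^ 2 : ℝ) * L ≤ 2 * t * σ ^ 2 * ε := by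
    rw [hε]
    linarith [mul_le_mul_of_nonneg_left hsens (by positivity : 0 ≤ t + t ^ 2),
      mul_le_mul_of_nonneg_left hshift (sq_nonneg σ)]
  have hv : (⟨σ ^ 2, sq_nonneg σ⟩ : ℝ≥0) ≠ 0 :=
    fun h ↦ (pow_pos hσ 2).ne' (congrArg NNReal.toReal h)
  calc gaussianReal μ ⟨σ ^ 2, sq_nonneg σ⟩ S
      ≤ ENNReal.ofReal (exp ε) * gaussianReal μ' ⟨σ ^ 2, sq_nonneg σ⟩ S +
          ENNReal.ofReal δ * gaussianReal (μ + t * (μ - μ')) ⟨σ ^ 2, sq_nonneg σ⟩ S := by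
        rw [← hδL]
        exact gaussianReal_le_exp_smul_add_exp_smul hv ht hcond S
    _ ≤ ENNReal.ofReal (exp ε) * gaussianReal μ' ⟨σ ^ 2, sq_nonneg σ⟩ S + ENNReal.ofReal δ := by
        gcongr
        exact mul_le_of_le_one_right' (prob_le_one (μ := gaussianReal (μ + t * (μ - μ')) _))
end

section
/- Let σ > 0, Δ > 0, α > 1, δ ∈ (0,1), and let μ, μ' ∈ ℝ with |μ − μ'| ≤ Δ. Set ψ = Δ/σ and ε = (α/2)·ψ² + log((α−1)/α) − (log δ + log α)/(α−1). Then for every measurable set S ⊆ ℝ, the Gaussian measures P = N(μ, σ²) and Q = N(μ', σ²) satisfy P(S) ≤ e^ε · Q(S) + δ; i.e., the Gaussian mechanism with sensitivity index ψ satisfies ((α/2)ψ² + log((α−1)/α) − (log δ + log α)/(α−1), δ)-differential privacy. -/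
/-!
For `t > 0` and `α > 1`, a Young-type inequality gives pointwise
`p ≤ t q + c_α t^(1-α) p^α q^(1-α)` with `c_α = (α-1)^(α-1) / α^α`. Integrating over `S` bounds
`P(S)` by `t Q(S) + c_α t^(1-α) exp ((α-1) D_α(P‖Q))`, and for two Gaussians of variance `σ²`
the Rényi divergence is `D_α = α (μ-μ')² / (2σ²) ≤ α ψ² / 2`. The choice `t = e^ε` makes the
last term exactly `δ` when `D_α` is replaced by `α ψ² / 2`.
-/

open MeasureTheory ProbabilityTheory Real

noncomputable def rdpConversionConst (α : ℝ) : ℝ := (α - 1) ^ (α - 1) / α ^ α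

lemma rdpConversionConst_pos {α : ℝ} (hα : 1 < α) : 0 < rdpConversionConst α := by
  unfold rdpConversionConst
  have : 0 < α - 1 := by linarith
  positivity

lemma rdpConversionConst_mul_rpow {α : ℝ} (hα : 1 < α) :
    rdpConversionConst α * (α / (α - 1)) ^ α = 1 / (α - 1) := by
  have hα0 : 0 < α := by linarith
  have hα1 : 0 < α - 1 := by linarith
  rw [rdpConversionConst, div_rpow hα0.le hα1.le, div_mul_div_comm, mul_comm,
    mul_div_mul_left _ _ (rpow_pos_of_pos hα0 α).ne', ← rpow_sub hα1, sub_sub_cancel_left,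
    rpow_neg_one, one_div]

/-- Bernoulli's inequality at the base point `α / (α - 1)`, where `u ↦ u - 1` touches
`u ↦ rdpConversionConst α * u ^ α`. -/
lemma le_one_add_rdpConversionConst_mul_rpow {α u : ℝ} (hα : 1 < α) (hu : 0 ≤ u) :
    u ≤ 1 + rdpConversionConst α * u ^ α := by
  have hα1 : 0 < α - 1 := by linarith
  set u₀ := α / (α - 1)
  have hu₀ : 0 < u₀ := by positivity
  have bernoulli : 1 + α * (u / u₀ - 1) ≤ (u / u₀) ^ α := by
    simpa using one_add_mul_self_le_rpow_one_add (s := u / u₀ - 1)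
      (by linarith [div_nonneg hu hu₀.le]) hα.le
  have hu_eq : u ^ α = u₀ ^ α * (u / u₀) ^ α := by
    rw [← mul_rpow hu₀.le (div_nonneg hu hu₀.le), mul_div_cancel₀ _ hu₀.ne']
  have hlin : 1 / (α - 1) * (1 + α * (u / u₀ - 1)) = u - 1 := by
    simp only [u₀]; field_simp; ring
  have := mul_le_mul_of_nonneg_left bernoulli (one_div_pos.mpr hα1).le
  rw [hu_eq, ← mul_assoc, rdpConversionConst_mul_rpow hα]
  linarith

lemma le_mul_add_rdpConversionConst_mul {α t a b : ℝ} (hα : 1 < α) (ht : 0 < t)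
    (ha : 0 ≤ a) (hb : 0 < b) :
    a ≤ t * b + rdpConversionConst α * t ^ (1 - α) * (a ^ α * b ^ (1 - α)) := by
  have htb : 0 < t * b := mul_pos ht hb
  have h := mul_le_mul_of_nonneg_left
    (le_one_add_rdpConversionConst_mul_rpow hα (div_nonneg ha htb.le)) htb.le
  have hpow : t * b * (a / (t * b)) ^ α = t ^ (1 - α) * (a ^ α * b ^ (1 - α)) := by
    rw [div_rpow ha htb.le, rpow_sub ht, rpow_sub hb, rpow_one, rpow_one, mul_rpow ht.le hb.le]
    field_simp
  rw [mul_div_cancel₀ _ htb.ne'] at h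
  linear_combination h + rdpConversionConst α * hpow

lemma setLIntegral_ofReal_le_mul_add_rdpConversionConst_mul {X : Type*} [MeasurableSpace X]
    {ν : Measure X} {p q : X → ℝ} {α t : ℝ} (hα : 1 < α) (ht : 0 < t) (hp : ∀ x, 0 ≤ p x)
    (hq : ∀ x, 0 < q x) (hq_meas : Measurable q) (S : Set X) :
    ∫⁻ x in S, ENNReal.ofReal (p x) ∂ν ≤
      ENNReal.ofReal t * ∫⁻ x in S, ENNReal.ofReal (q x) ∂ν +
        ENNReal.ofReal (rdpConversionConst α * t ^ (1 - α)) *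
          ∫⁻ x, ENNReal.ofReal (p x ^ α * q x ^ (1 - α)) ∂ν := by
  have hC : 0 ≤ rdpConversionConst α * t ^ (1 - α) :=
    mul_nonneg (rdpConversionConst_pos hα).le (rpow_nonneg ht.le _)
  calc ∫⁻ x in S, ENNReal.ofReal (p x) ∂ν
      ≤ ∫⁻ x in S, ENNReal.ofReal t * ENNReal.ofReal (q x) +
          ENNReal.ofReal (rdpConversionConst α * t ^ (1 - α)) *
            ENNReal.ofReal (p x ^ α * q x ^ (1 - α)) ∂ν := by
        refine lintegral_mono fun x ↦ ?_
        rw [← ENNReal.ofReal_mul ht.le, ← ENNReal.ofReal_mul hC, ← ENNReal.ofReal_add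
          (mul_nonneg ht.le (hq x).le) (mul_nonneg hC (mul_nonneg (rpow_nonneg (hp x) _) (rpow_nonneg (hq x).le _)))]
        exact ENNReal.ofReal_le_ofReal
          (by simpa only [mul_assoc] using le_mul_add_rdpConversionConst_mul hα ht (hp x) (hq x))
    _ ≤ ENNReal.ofReal t * ∫⁻ x in S, ENNReal.ofReal (q x) ∂ν +
          ENNReal.ofReal (rdpConversionConst α * t ^ (1 - α)) *
            ∫⁻ x, ENNReal.ofReal (p x ^ α * q x ^ (1 - α)) ∂ν := by
        rw [lintegral_add_left (hq_meas.ennreal_ofReal.const_mul _),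
          lintegral_const_mul' _ _ ENNReal.ofReal_ne_top,
          lintegral_const_mul' _ _ ENNReal.ofReal_ne_top]
        gcongr
        exact Measure.restrict_le_self

/-- `α (μ - μ')² / (2v)` is the Rényi divergence of order `α` between the two Gaussians. -/
lemma gaussianPDFReal_rpow_mul_rpow (μ μ' α : ℝ) (v : NNReal) (hv : v ≠ 0) (x : ℝ) :
    gaussianPDFReal μ v x ^ α * gaussianPDFReal μ' v x ^ (1 - α) =
      exp ((α - 1) * (α * (μ - μ') ^ 2 / (2 * v))) *
        gaussianPDFReal (α * μ + (1 - α) * μ') v x := by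
  have hc : 0 ≤ (√(2 * π * v))⁻¹ := by positivity
  simp only [gaussianPDFReal]
  rw [mul_rpow hc (exp_nonneg _), mul_rpow hc (exp_nonneg _), ← exp_mul, ← exp_mul]
  have hcc : (√(2 * π * v))⁻¹ ^ α * (√(2 * π * v))⁻¹ ^ (1 - α) = (√(2 * π * v))⁻¹ := by
    rw [← rpow_add' hc (by simp), add_sub_cancel, rpow_one]
  have hexp : -(x - μ) ^ 2 / (2 * v) * α + -(x - μ') ^ 2 / (2 * v) * (1 - α) =
      (α - 1) * (α * (μ - μ') ^ 2 / (2 * v)) + -(x - (α * μ + (1 - α) * μ')) ^ 2 / (2 * v) := by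
    field_simp; ring
  calc _ = ((√(2 * π * v))⁻¹ ^ α * (√(2 * π * v))⁻¹ ^ (1 - α)) *
        exp (-(x - μ) ^ 2 / (2 * v) * α + -(x - μ') ^ 2 / (2 * v) * (1 - α)) := by
        rw [exp_add]; ring
    _ = _ := by rw [hcc, hexp, exp_add]; ring

lemma lintegral_gaussianPDFReal_rpow_mul_rpow (μ μ' α : ℝ) {v : NNReal} (hv : v ≠ 0) :
    ∫⁻ x, ENNReal.ofReal (gaussianPDFReal μ v x ^ α * gaussianPDFReal μ' v x ^ (1 - α)) =
      ENNReal.ofReal (exp ((α - 1) * (α * (μ - μ') ^ 2 / (2 * v)))) := by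
  simp_rw [gaussianPDFReal_rpow_mul_rpow μ μ' α v hv,
    ENNReal.ofReal_mul (exp_nonneg _)]
  rw [lintegral_const_mul' _ _ ENNReal.ofReal_ne_top, show (fun x ↦ ENNReal.ofReal (gaussianPDFReal (α * μ + (1 - α) * μ') v x)) =
    gaussianPDF (α * μ + (1 - α) * μ') v from rfl, lintegral_gaussianPDF_eq_one _ hv, mul_one]

/-- The improved conversion is calibrated so that the bound of
`setLIntegral_ofReal_le_mul_add_rdpConversionConst_mul` with `t = exp ε` is exactly `δ`. -/
lemma rdpConversionConst_mul_exp_rpow_mul_exp {α δ : ℝ} (hα : 1 < α) (hδ : 0 < δ) (ρ : ℝ) :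
    rdpConversionConst α *
        exp (ρ + log ((α - 1) / α) - (log δ + log α) / (α - 1)) ^ (1 - α) *
      exp ((α - 1) * ρ) = δ := by
  have hα0 : 0 < α := by linarith
  have hα1 : 0 < α - 1 := by linarith
  rw [← exp_mul, show (ρ + log ((α - 1) / α) - (log δ + log α) / (α - 1)) * (1 - α) =
      -((α - 1) * ρ) + log ((α - 1) / α) * (1 - α) + (log δ + log α) by field_simp; ring,
    exp_add, exp_add, exp_mul, exp_log (by positivity), exp_add, exp_log hδ, exp_log hα0,
    exp_neg, rdpConversionConst, div_rpow hα1.le hα0.le]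
  have hα1_pow : (α - 1) ^ (α - 1) * (α - 1) ^ (1 - α) = 1 := by
    rw [← rpow_add hα1, sub_add_sub_cancel, sub_self, rpow_zero]
  have hα_pow : α ^ α * α ^ (1 - α) = α := by
    rw [← rpow_add hα0, add_sub_cancel, rpow_one]
  field_simp
  linear_combination α * hα1_pow - hα_pow

theorem gaussian_mechanism_rdp_to_dp_improved_general (σ Δ α δ μ μ' ψ ε : ℝ)
    (hσ : 0 < σ) (hα : 1 < α) (hδ : δ ∈ Set.Ioo (0 : ℝ) 1)
    (hadj : |μ - μ'| ≤ Δ) (hψ : ψ = Δ / σ)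
    (hε : ε = α / 2 * ψ ^ 2 + Real.log ((α - 1) / α) -
      (Real.log δ + Real.log α) / (α - 1)) :
    ∀ S : Set ℝ, MeasurableSet S →
      (gaussianReal μ ⟨σ ^ 2, sq_nonneg σ⟩) S ≤
        ENNReal.ofReal (Real.exp ε) * (gaussianReal μ' ⟨σ ^ 2, sq_nonneg σ⟩) S +
          ENNReal.ofReal δ := by
  intro S _
  set v : NNReal := ⟨σ ^ 2, sq_nonneg σ⟩
  have hv : v ≠ 0 := (NNReal.coe_pos (r := v)).mp (show (0 : ℝ) < σ ^ 2 by positivity) |>.ne'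
  have hrenyi : α * (μ - μ') ^ 2 / (2 * v) ≤ α / 2 * ψ ^ 2 := by
    have : (μ - μ') ^ 2 ≤ Δ ^ 2 := sq_le_sq' (abs_le.mp hadj).1 (abs_le.mp hadj).2
    rw [hψ, div_pow, show (v : ℝ) = σ ^ 2 from rfl]
    field_simp
    gcongr
  rw [gaussianReal_apply μ hv, gaussianReal_apply μ' hv]
  refine (setLIntegral_ofReal_le_mul_add_rdpConversionConst_mul hα (exp_pos ε)
    (gaussianPDFReal_nonneg μ v) (gaussianPDFReal_pos μ' v · hv)
    (measurable_gaussianPDFReal μ' v) S).trans ?_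
  rw [lintegral_gaussianPDFReal_rpow_mul_rpow μ μ' α hv, ← ENNReal.ofReal_mul
    (mul_nonneg (rdpConversionConst_pos hα).le (rpow_nonneg (exp_pos ε).le _))]
  refine add_le_add le_rfl (ENNReal.ofReal_le_ofReal ?_)
  calc rdpConversionConst α * exp ε ^ (1 - α) * exp ((α - 1) * (α * (μ - μ') ^ 2 / (2 * v)))
      ≤ rdpConversionConst α * exp ε ^ (1 - α) * exp ((α - 1) * (α / 2 * ψ ^ 2)) := by
        have := rdpConversionConst_pos hα
        have : 0 < α - 1 := by linarith
        gcongr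
    _ = δ := by rw [hε]; exact rdpConversionConst_mul_exp_rpow_mul_exp hα hδ.1 _

/-- improved RDP-to-DP conversion for the Gaussian mechanism. For
`σ > 0`, `Δ > 0`, `α > 1`, `δ ∈ (0,1)`, `|μ − μ'| ≤ Δ`, `ψ = Δ/σ` and
`ε = (α/2)ψ² + log((α−1)/α) − (log δ + log α)/(α−1)`, the measures `P = N(μ, σ²)`,
`Q = N(μ', σ²)` satisfy `P(S) ≤ e^ε·Q(S) + δ` for every measurable `S`. -/
theorem gaussian_mechanism_rdp_to_dp_improved (σ Δ α δ μ μ' ψ ε : ℝ)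
    (hσ : 0 < σ) (hΔ : 0 < Δ) (hα : 1 < α) (hδ : δ ∈ Set.Ioo (0 : ℝ) 1)
    (hadj : |μ - μ'| ≤ Δ) (hψ : ψ = Δ / σ)
    (hε : ε = α / 2 * ψ ^ 2 + Real.log ((α - 1) / α) -
      (Real.log δ + Real.log α) / (α - 1)) :
    ∀ S : Set ℝ, MeasurableSet S →
      (gaussianReal μ ⟨σ ^ 2, sq_nonneg σ⟩) S ≤
        ENNReal.ofReal (Real.exp ε) * (gaussianReal μ' ⟨σ ^ 2, sq_nonneg σ⟩) S +
          ENNReal.ofReal δ :=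
  gaussian_mechanism_rdp_to_dp_improved_general σ Δ α δ μ μ' ψ ε hσ hα hδ hadj hψ hε
end

section
/- Let σ > 0, Δ > 0, ε > 0 and δ ∈ [0,1], and set ψ = Δ/σ. Let P = N(0, σ²) and Q = N(Δ, σ²). Then the following are equivalent: (i) for every measurable set S ⊆ ℝ, both P(S) ≤ e^ε · Q(S) + δ and Q(S) ≤ e^ε · P(S) + δ; (ii) δ ≥ Φ(ψ/2 − ε/ψ) − e^ε · Φ(−ψ/2 − ε/ψ). In other words, the worst-case Gaussian mechanism with sensitivity index ψ is (ε, δ)-DP if and only if δ ≥ Φ(ψ/2 − ε/ψ) − e^ε·Φ(−ψ/2 − ε/ψ). -/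
/-!
The likelihood ratio of `N(0, σ²)` to `N(Δ, σ²)` is `exp (Δ² / (2σ²) - Δ x / σ²)`, decreasing
in `x`. Hence `P(S) - e^ε Q(S) = ∫_S (p - e^ε q)` is maximised by the half-line
`S = (-∞, t]` on which `e^ε q ≤ p`, with `t = Δ/2 - σ²ε/Δ`, where the two measures are
`Φ(ψ/2 - ε/ψ)` and `Φ(-ψ/2 - ε/ψ)` after standardisation. The reflection `x ↦ Δ - x`
exchanges `P` and `Q`, so the second inequality of the DP condition follows from the first.
-/

open MeasureTheory ProbabilityTheory Real

open Set
open scoped NNReal ENNReal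

lemma gaussianReal_real_Iic (μ : ℝ) {σ : ℝ} (hσ : 0 < σ) (x : ℝ) :
    (gaussianReal μ ⟨σ ^ 2, sq_nonneg σ⟩).real (Iic x) = stdNormalCDF ((x - μ) / σ) := by
  have hstd : gaussianReal μ ⟨σ ^ 2, sq_nonneg σ⟩ =
      (gaussianReal 0 1).map (fun y => σ * y + μ) :=
    calc gaussianReal μ ⟨σ ^ 2, sq_nonneg σ⟩
        = ((gaussianReal 0 1).map (σ * ·)).map (· + μ) := by
          rw [gaussianReal_map_const_mul, gaussianReal_map_add_const]
          congr 1
          · simp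
          · ext
            simp only [mul_one]
            rfl
      _ = (gaussianReal 0 1).map (fun y => σ * y + μ) :=
          Measure.map_map (by fun_prop) (by fun_prop)
  have hpre : (fun y => σ * y + μ) ⁻¹' Iic x = Iic ((x - μ) / σ) := by
    ext y
    simp only [mem_preimage, mem_Iic, le_div_iff₀ hσ]
    constructor <;> intro h <;> linarith
  rw [hstd, map_measureReal_apply (by fun_prop) measurableSet_Iic, hpre, stdNormalCDF,
    measureReal_def]

lemma exp_mul_gaussianPDFReal_le_iff {v : ℝ≥0} (hv : v ≠ 0) {Δ : ℝ} (hΔ : 0 < Δ) (ε x : ℝ) :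
    exp ε * gaussianPDFReal Δ v x ≤ gaussianPDFReal 0 v x ↔ x ≤ Δ / 2 - v * ε / Δ := by
  have hv' : (0 : ℝ) < v := NNReal.coe_pos.2 (pos_iff_ne_zero.2 hv)
  have hexponent : -(x - 0) ^ 2 / (2 * v) - (ε + -(x - Δ) ^ 2 / (2 * v)) =
      Δ / v * (Δ / 2 - v * ε / Δ - x) := by
    field_simp
    ring
  rw [gaussianPDFReal_def, gaussianPDFReal_def, mul_left_comm,
    mul_le_mul_iff_right₀ (by positivity), ← exp_add, exp_le_exp, ← sub_nonneg, hexponent,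
    mul_nonneg_iff_of_pos_left (by positivity), sub_nonneg]

lemma setIntegral_le_setIntegral_of_nonneg_of_nonpos_compl {α : Type*} [MeasurableSpace α]
    {μ : Measure α} {f : α → ℝ} (hf : Integrable f μ) {A S : Set α} (hA : MeasurableSet A)
    (hS : MeasurableSet S) (hfA : ∀ x ∈ A, 0 ≤ f x) (hfAc : ∀ x ∉ A, f x ≤ 0) :
    ∫ x in S, f x ∂μ ≤ ∫ x in A, f x ∂μ :=
  calc ∫ x in S, f x ∂μ = ∫ x in S ∩ A, f x ∂μ + ∫ x in S \ A, f x ∂μ :=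
        (integral_inter_add_sdiff hA hf.integrableOn).symm
    _ ≤ ∫ x in S ∩ A, f x ∂μ :=
        add_le_of_nonpos_right (setIntegral_nonpos (hS.diff hA) fun x hx => hfAc x hx.2)
    _ ≤ ∫ x in A, f x ∂μ :=
        setIntegral_mono_set hf.integrableOn ((ae_restrict_iff' hA).2 (ae_of_all _ hfA))
          inter_subset_right.eventuallyLE

lemma gaussianReal_real_eq_integral (μ : ℝ) {v : ℝ≥0} (hv : v ≠ 0) (s : Set ℝ) :
    (gaussianReal μ v).real s = ∫ x in s, gaussianPDFReal μ v x := by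
  rw [measureReal_def, gaussianReal_apply_eq_integral μ hv,
    ENNReal.toReal_ofReal (integral_nonneg fun x => gaussianPDFReal_nonneg μ v x)]

lemma gaussianReal_real_sub_exp_mul_le {v : ℝ≥0} (hv : v ≠ 0) {Δ : ℝ} (hΔ : 0 < Δ) (ε : ℝ)
    {S : Set ℝ} (hS : MeasurableSet S) :
    (gaussianReal 0 v).real S - exp ε * (gaussianReal Δ v).real S ≤
      (gaussianReal 0 v).real (Iic (Δ / 2 - v * ε / Δ)) -
        exp ε * (gaussianReal Δ v).real (Iic (Δ / 2 - v * ε / Δ)) := by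
  have hint : Integrable fun x => gaussianPDFReal 0 v x - exp ε * gaussianPDFReal Δ v x :=
    (integrable_gaussianPDFReal 0 v).sub ((integrable_gaussianPDFReal Δ v).const_mul _)
  have hrepr : ∀ A, (gaussianReal 0 v).real A - exp ε * (gaussianReal Δ v).real A =
      ∫ x in A, (gaussianPDFReal 0 v x - exp ε * gaussianPDFReal Δ v x) := fun A => by
    rw [integral_sub (integrable_gaussianPDFReal 0 v).integrableOn
      ((integrable_gaussianPDFReal Δ v).const_mul _).integrableOn, integral_const_mul,
      gaussianReal_real_eq_integral 0 hv, gaussianReal_real_eq_integral Δ hv]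
  rw [hrepr, hrepr]
  refine setIntegral_le_setIntegral_of_nonneg_of_nonpos_compl hint measurableSet_Iic hS
    (fun x hx => sub_nonneg.2 ((exp_mul_gaussianPDFReal_le_iff hv hΔ ε x).2 hx))
    (fun x hx => sub_nonpos.2 ?_)
  exact (not_le.1 (mt (exp_mul_gaussianPDFReal_le_iff hv hΔ ε x).1 hx)).le

lemma measure_le_ofReal_mul_add_ofReal_iff {α : Type*} [MeasurableSpace α] {μ ν : Measure α}
    [IsFiniteMeasure μ] [IsFiniteMeasure ν] {c d : ℝ} (hc : 0 ≤ c) (hd : 0 ≤ d) (s : Set α) :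
    μ s ≤ ENNReal.ofReal c * ν s + ENNReal.ofReal d ↔ μ.real s ≤ c * ν.real s + d := by
  rw [← ofReal_measureReal (μ := ν), ← ENNReal.ofReal_mul hc,
    ← ENNReal.ofReal_add (by positivity) hd,
    ENNReal.le_ofReal_iff_toReal_le (measure_ne_top μ s) (by positivity), measureReal_def,
    measureReal_def]

lemma measure_le_mul_add_of_map_swap {α : Type*} [MeasurableSpace α] {μ ν : Measure α}
    {f : α → α} (hf : Measurable f) (hμ : μ.map f = ν) (hν : ν.map f = μ) {c d : ℝ≥0∞}
    (h : ∀ s, MeasurableSet s → μ s ≤ c * ν s + d) (s : Set α) (hs : MeasurableSet s) :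
    ν s ≤ c * μ s + d :=
  calc ν s = μ (f ⁻¹' s) := by rw [← hμ, Measure.map_apply hf hs]
    _ ≤ c * ν (f ⁻¹' s) + d := h _ (hf hs)
    _ = c * μ s + d := by rw [← Measure.map_apply hf hs, hν]

theorem analytic_gaussian_mechanism_general (σ Δ ε δ ψ : ℝ) (hσ : 0 < σ) (hΔ : 0 < Δ)
    (hδ : δ ∈ Set.Icc (0 : ℝ) 1) (hψ : ψ = Δ / σ) :
    (∀ S : Set ℝ, MeasurableSet S →
        (gaussianReal 0 ⟨σ ^ 2, sq_nonneg σ⟩) S ≤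
          ENNReal.ofReal (Real.exp ε) * (gaussianReal Δ ⟨σ ^ 2, sq_nonneg σ⟩) S +
            ENNReal.ofReal δ ∧
        (gaussianReal Δ ⟨σ ^ 2, sq_nonneg σ⟩) S ≤
          ENNReal.ofReal (Real.exp ε) * (gaussianReal 0 ⟨σ ^ 2, sq_nonneg σ⟩) S +
            ENNReal.ofReal δ) ↔
      stdNormalCDF (ψ / 2 - ε / ψ) - Real.exp ε * stdNormalCDF (-ψ / 2 - ε / ψ) ≤ δ := by
  set v : ℝ≥0 := ⟨σ ^ 2, sq_nonneg σ⟩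
  have hv : v ≠ 0 := ne_of_gt (show (0 : ℝ) < σ ^ 2 by positivity)
  have hvσ : (v : ℝ) = σ ^ 2 := rfl
  set t := Δ / 2 - v * ε / Δ
  have hP : (gaussianReal 0 v).real (Iic t) = stdNormalCDF (ψ / 2 - ε / ψ) := by
    rw [gaussianReal_real_Iic 0 hσ, hψ]
    congr 1
    simp only [t, hvσ]
    field_simp
    ring
  have hQ : (gaussianReal Δ v).real (Iic t) = stdNormalCDF (-ψ / 2 - ε / ψ) := by
    rw [gaussianReal_real_Iic Δ hσ, hψ]
    congr 1
    simp only [t, hvσ]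
    field_simp
    ring
  have hreal := fun S => measure_le_ofReal_mul_add_ofReal_iff (μ := gaussianReal 0 v)
    (ν := gaussianReal Δ v) (exp_nonneg ε) hδ.1 S
  rw [← hP, ← hQ]
  constructor
  · intro h
    linarith [(hreal (Iic t)).1 (h (Iic t) measurableSet_Iic).1]
  · intro h
    have hPQ : ∀ S, MeasurableSet S →
        gaussianReal 0 v S ≤ ENNReal.ofReal (exp ε) * gaussianReal Δ v S + ENNReal.ofReal δ :=
      fun S hS => (hreal S).2 (by linarith [gaussianReal_real_sub_exp_mul_le hv hΔ ε hS])
    refine fun S hS => ⟨hPQ S hS, measure_le_mul_add_of_map_swap (f := (Δ - ·)) (by fun_prop)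
      ?_ ?_ hPQ S hS⟩
    · simpa using gaussianReal_map_const_sub (μ := 0) (v := v) Δ
    · simpa using gaussianReal_map_const_sub (μ := Δ) (v := v) Δ

/-- the Analytic Gaussian Mechanism. For `σ > 0`, `Δ > 0`, `ε > 0`,
`δ ∈ [0,1]`, `ψ = Δ/σ`, `P = N(0, σ²)` and `Q = N(Δ, σ²)`, the symmetric `(ε, δ)`-DP
condition (for all measurable `S`, `P(S) ≤ e^ε·Q(S) + δ` and `Q(S) ≤ e^ε·P(S) + δ`)
holds if and only if `δ ≥ Φ(ψ/2 − ε/ψ) − e^ε·Φ(−ψ/2 − ε/ψ)`. -/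
theorem analytic_gaussian_mechanism (σ Δ ε δ ψ : ℝ) (hσ : 0 < σ) (hΔ : 0 < Δ)
    (hε : 0 < ε) (hδ : δ ∈ Set.Icc (0 : ℝ) 1) (hψ : ψ = Δ / σ) :
    (∀ S : Set ℝ, MeasurableSet S →
        (gaussianReal 0 ⟨σ ^ 2, sq_nonneg σ⟩) S ≤
          ENNReal.ofReal (Real.exp ε) * (gaussianReal Δ ⟨σ ^ 2, sq_nonneg σ⟩) S +
            ENNReal.ofReal δ ∧
        (gaussianReal Δ ⟨σ ^ 2, sq_nonneg σ⟩) S ≤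
          ENNReal.ofReal (Real.exp ε) * (gaussianReal 0 ⟨σ ^ 2, sq_nonneg σ⟩) S +
            ENNReal.ofReal δ) ↔
      stdNormalCDF (ψ / 2 - ε / ψ) - Real.exp ε * stdNormalCDF (-ψ / 2 - ε / ψ) ≤ δ :=
  analytic_gaussian_mechanism_general σ Δ ε δ ψ hσ hΔ hδ hψ
end

section
/- Let n ≥ 1 and v ∈ ℝⁿ, and let P = ⨂_{i=1}^n N(vᵢ, 1) and Q = ⨂_{i=1}^n N(0, 1) be product Gaussian measures on ℝⁿ. Then for every γ ≥ 0, the supremum over measurable sets S ⊆ ℝⁿ of P(S) − γ·Q(S) equals the supremum over measurable sets T ⊆ ℝ of N(‖v‖₂, 1)(T) − γ·N(0, 1)(T). Consequently, the n-fold composition of Gaussian mechanisms with sensitivity indices ψ₁, …, ψₙ has the same privacy profile as a single Gaussian mechanism with sensitivity index √(ψ₁² + ⋯ + ψₙ²), i.e., the composition is √(ψ₁² + ⋯ + ψₙ²)-GDP. -/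
/-!
The likelihood ratio of `P = ⨂ᵢ N(vᵢ, 1)` to `Q = ⨂ᵢ N(0, 1)` is
`x ↦ exp (⟪v, x⟫ - ‖v‖² / 2) = g ⟪u, x⟫` with `g t = exp (‖v‖ t - ‖v‖² / 2)`, where `u` is a unit
vector with `v = ‖v‖ • u`. Under `Q` the statistic `⟪u, x⟫` is `N(0, 1)`, and `g` is the likelihood
ratio of `N(‖v‖, 1)` to `N(0, 1)`. By the Neyman–Pearson argument the hockey-stick divergence of
`Q.withDensity h` from `Q` is `∫ (h - γ)⁺ dQ`, which only depends on the law of `h` under `Q`;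
so the two divergences agree.
-/

open MeasureTheory ProbabilityTheory Real

open scoped NNReal ENNReal

section HockeyStick

variable {α β : Type*} [MeasurableSpace α] [MeasurableSpace β]

noncomputable def hockeyStick (P Q : Measure α) (γ : ℝ) : ℝ :=
  ⨆ S : {S : Set α // MeasurableSet S}, P.real S - γ * Q.real S

theorem measureReal_withDensity_ofReal (Q : Measure α) {h : α → ℝ} (h0 : 0 ≤ h)
    (hint : Integrable h Q) {S : Set α} (hS : MeasurableSet S) :
    (Q.withDensity fun x => ENNReal.ofReal (h x)).real S = ∫ x in S, h x ∂Q := by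
  rw [measureReal_def, withDensity_apply _ hS,
    ← ofReal_integral_eq_lintegral_ofReal hint.restrict (ae_of_all _ h0),
    ENNReal.toReal_ofReal (integral_nonneg h0)]

theorem hockeyStick_withDensity_ofReal (Q : Measure α) [IsFiniteMeasure Q] {h : α → ℝ}
    (hh : Measurable h) (h0 : 0 ≤ h) (hint : Integrable h Q) (γ : ℝ) :
    hockeyStick (Q.withDensity fun x => ENNReal.ofReal (h x)) Q γ =
      ∫ x, max (h x - γ) 0 ∂Q := by
  have hint' : Integrable (fun x => h x - γ) Q := hint.sub (integrable_const γ)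
  have hdiff : ∀ S, MeasurableSet S →
      (Q.withDensity fun x => ENNReal.ofReal (h x)).real S - γ * Q.real S =
        ∫ x in S, (h x - γ) ∂Q := fun S hS => by
    rw [measureReal_withDensity_ofReal Q h0 hint hS, integral_sub hint.restrict
      (integrable_const γ), setIntegral_const, smul_eq_mul, mul_comm]
  have hbound : ∀ S : {S : Set α // MeasurableSet S},
      (Q.withDensity fun x => ENNReal.ofReal (h x)).real S - γ * Q.real S ≤
        ∫ x, max (h x - γ) 0 ∂Q := fun ⟨S, hS⟩ => by
    rw [hdiff S hS]
    calc ∫ x in S, (h x - γ) ∂Q ≤ ∫ x in S, max (h x - γ) 0 ∂Q :=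
          integral_mono hint'.restrict hint'.pos_part.restrict fun x => le_max_left _ _
      _ ≤ ∫ x, max (h x - γ) 0 ∂Q :=
          setIntegral_le_integral hint'.pos_part (ae_of_all _ fun x => le_max_right _ _)
  have hA : MeasurableSet {x | γ < h x} := measurableSet_lt measurable_const hh
  have hattained : ∫ x, max (h x - γ) 0 ∂Q = ∫ x in {x | γ < h x}, (h x - γ) ∂Q := by
    rw [← integral_indicator hA]
    congr 1 with x
    by_cases hx : γ < h x
    · simp [hx, hx.le]
    · simp [hx, not_lt.mp hx]
  refine le_antisymm (ciSup_le hbound) ?_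
  rw [hattained, ← hdiff _ hA]
  exact le_ciSup ⟨_, Set.forall_mem_range.2 hbound⟩ (⟨_, hA⟩ : {S : Set α // MeasurableSet S})

theorem hockeyStick_withDensity_comp (Q : Measure α) [IsFiniteMeasure Q] {T : α → β}
    (hT : Measurable T) {g : β → ℝ} (hg : Measurable g) (g0 : 0 ≤ g)
    (hint : Integrable g (Q.map T)) (γ : ℝ) :
    hockeyStick (Q.withDensity fun x => ENNReal.ofReal (g (T x))) Q γ =
      hockeyStick ((Q.map T).withDensity fun t => ENNReal.ofReal (g t)) (Q.map T) γ := by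
  rw [hockeyStick_withDensity_ofReal (h := fun x => g (T x)) _ (hg.comp hT) (fun x => g0 (T x))
      (hint.comp_measurable hT), hockeyStick_withDensity_ofReal _ hg g0 hint,
    integral_map hT.aemeasurable ((hg.sub_const γ).max measurable_const).aestronglyMeasurable]

end HockeyStick

section Product

variable {ι : Type*} [Fintype ι] {E : ι → Type*} [∀ i, MeasurableSpace (E i)]

theorem lintegral_fintype_prod_eq_prod (μ : ∀ i, Measure (E i))
    [∀ i, IsProbabilityMeasure (μ i)] {f : ∀ i, E i → ℝ≥0∞} (hf : ∀ i, Measurable (f i)) :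
    ∫⁻ x, ∏ i, f i (x i) ∂Measure.pi μ = ∏ i, ∫⁻ y, f i y ∂μ i := by
  rw [lintegral_prod_eq_prod_lintegral_of_indepFun _ _
    (iIndepFun_pi fun i => (hf i).aemeasurable) fun i => (hf i).comp (measurable_pi_apply i)]
  exact Finset.prod_congr rfl fun i _ => (measurePreserving_eval μ i).lintegral_comp (hf i)

theorem Measure.pi_withDensity (μ : ∀ i, Measure (E i)) [∀ i, IsProbabilityMeasure (μ i)]
    {f : ∀ i, E i → ℝ≥0∞} (hf : ∀ i, Measurable (f i))
    [∀ i, SigmaFinite ((μ i).withDensity (f i))] :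
    Measure.pi (fun i => (μ i).withDensity (f i)) =
      (Measure.pi μ).withDensity fun x => ∏ i, f i (x i) := by
  refine Measure.pi_eq fun s hs => ?_
  have hbox : (Set.univ.pi s).indicator (fun x => ∏ i, f i (x i)) =
      fun x => ∏ i, (s i).indicator (f i) (x i) := by
    ext x
    classical
    simp only [Set.indicator_apply, Finset.prod_ite_zero, Set.mem_univ_pi, Finset.mem_univ,
      true_implies]
  rw [withDensity_apply _ (MeasurableSet.univ_pi hs),
    ← lintegral_indicator (MeasurableSet.univ_pi hs), hbox,
    lintegral_fintype_prod_eq_prod μ fun i => (hf i).indicator (hs i)]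
  exact Finset.prod_congr rfl fun i _ => by
    rw [lintegral_indicator (hs i), withDensity_apply _ (hs i)]

end Product

section Gaussian

theorem gaussianReal_eq_withDensity_exp (a : ℝ) {v : ℝ≥0} (hv : v ≠ 0) :
    gaussianReal a v = (gaussianReal 0 v).withDensity
      fun x => ENNReal.ofReal (rexp ((a * x - a ^ 2 / 2) / v)) := by
  rw [gaussianReal_of_var_ne_zero _ hv, gaussianReal_of_var_ne_zero _ hv,
    ← withDensity_mul _ (measurable_gaussianPDF 0 v) (by fun_prop)]
  congr 1 with x
  simp only [Pi.mul_apply, gaussianPDF, gaussianPDFReal]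
  rw [← ENNReal.ofReal_mul (by positivity)]
  congr 1
  rw [mul_assoc _ (rexp _), ← Real.exp_add]
  congr 2
  field_simp
  ring

variable {ι : Type*} [Fintype ι]

theorem pi_gaussianReal_eq_withDensity (v : ι → ℝ) :
    Measure.pi (fun i => gaussianReal (v i) 1) =
      (Measure.pi fun _ : ι => gaussianReal 0 1).withDensity
        fun x => ENNReal.ofReal (rexp (∑ i, v i * x i - (∑ i, v i ^ 2) / 2)) := by
  rw [show (fun i => gaussianReal (v i) 1) = _ from
      funext fun i => gaussianReal_eq_withDensity_exp (v i) one_ne_zero,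
    Measure.pi_withDensity _ fun i => by fun_prop]
  congr 1 with x
  rw [← ENNReal.ofReal_prod_of_nonneg fun i _ => (exp_pos _).le, ← exp_sum,
    Finset.sum_div, ← Finset.sum_sub_distrib]
  simp

theorem map_pi_gaussianReal_sum_mul (u : ι → ℝ) :
    (Measure.pi fun _ : ι => gaussianReal 0 1).map (fun x => ∑ i, u i * x i) =
      gaussianReal 0 (∑ i, u i ^ 2).toNNReal := by
  have hT : (fun x : ι → ℝ => ∑ i, u i * x i) =
      innerSL ℝ (WithLp.toLp 2 u : EuclideanSpace ℝ ι) ∘ WithLp.toLp 2 := by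
    ext x
    simp [PiLp.inner_apply, mul_comm]
  rw [hT, ← Measure.map_map (by fun_prop) (by fun_prop), map_pi_eq_stdGaussian,
    IsGaussian.map_eq_gaussianReal, integral_strongDual_stdGaussian, variance_dual_stdGaussian,
    innerSL_apply_norm, EuclideanSpace.norm_sq_eq]
  simp

end Gaussian

theorem exists_sum_sq_eq_one_and_eq_sqrt_smul {ι : Type*} [Fintype ι] [Nonempty ι]
    (v : ι → ℝ) : ∃ u : ι → ℝ, ∑ i, u i ^ 2 = 1 ∧ v = √(∑ i, v i ^ 2) • u := by
  by_cases hv : v = 0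
  · classical
    obtain ⟨i₀⟩ := ‹Nonempty ι›
    refine ⟨Pi.single i₀ 1, ?_, by simp [hv]⟩
    rw [Fintype.sum_eq_single i₀ fun j hj => by simp [hj]]
    simp
  · have hpos : 0 < ∑ i, v i ^ 2 := by
      obtain ⟨i, hi⟩ : ∃ i, v i ≠ 0 := Function.ne_iff.mp hv
      exact Finset.sum_pos' (fun j _ => sq_nonneg _) ⟨i, Finset.mem_univ i, by positivity⟩
    refine ⟨(√(∑ i, v i ^ 2))⁻¹ • v, ?_, ?_⟩
    · simp_rw [Pi.smul_apply, smul_eq_mul, mul_pow, ← Finset.mul_sum, inv_pow,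
        sq_sqrt hpos.le, inv_mul_cancel₀ hpos.ne']
    · rw [smul_smul, mul_inv_cancel₀ (sqrt_pos.mpr hpos).ne', one_smul]

theorem gaussian_composition_privacy_profile_general (n : ℕ) (hn : 1 ≤ n) (v : Fin n → ℝ)
    (γ : ℝ) :
    (⨆ S : {S : Set (Fin n → ℝ) // MeasurableSet S},
        ((Measure.pi fun i => gaussianReal (v i) 1) S.1).toReal -
          γ * ((Measure.pi fun _ => gaussianReal 0 1) S.1).toReal) =
      ⨆ T : {T : Set ℝ // MeasurableSet T},
        ((gaussianReal (Real.sqrt (∑ i, v i ^ 2)) 1) T.1).toReal -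
          γ * ((gaussianReal 0 1) T.1).toReal := by
  have : Nonempty (Fin n) := ⟨⟨0, hn⟩⟩
  obtain ⟨u, hu, hvu⟩ := exists_sum_sq_eq_one_and_eq_sqrt_smul v
  set m := √(∑ i, v i ^ 2)
  set T : (Fin n → ℝ) → ℝ := fun x => ∑ i, u i * x i
  set g : ℝ → ℝ := fun t => rexp (m * t - m ^ 2 / 2)
  have hP : Measure.pi (fun i => gaussianReal (v i) 1) =
      (Measure.pi fun _ => gaussianReal 0 1).withDensity fun x => ENNReal.ofReal (g (T x)) := by
    rw [pi_gaussianReal_eq_withDensity, hvu]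
    simp [g, T, mul_pow, mul_assoc, ← Finset.mul_sum, hu]
  have hQ : (Measure.pi fun _ => gaussianReal 0 1).map T = gaussianReal 0 1 := by
    simp [T, map_pi_gaussianReal_sum_mul, hu]
  have hg : Integrable g (gaussianReal 0 1) := by
    simpa [g, exp_sub] using (integrable_exp_mul_gaussianReal m).div_const (rexp (m ^ 2 / 2))
  show hockeyStick _ _ γ = hockeyStick _ _ γ
  rw [hP, gaussianReal_eq_withDensity_exp m one_ne_zero]
  conv_rhs => rw [← hQ]
  simp only [NNReal.coe_one, div_one]
  exact hockeyStick_withDensity_comp (T := T) (g := g) _ (by fun_prop) (by fun_prop)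
    (fun _ => (exp_pos _).le) (by rwa [hQ]) γ

/-- composition of Gaussian mechanisms. For `n ≥ 1`, `v ∈ ℝⁿ`,
`P = ⨂ᵢ N(vᵢ, 1)`, `Q = ⨂ᵢ N(0, 1)` and `γ ≥ 0`, the hockey-stick divergence
`sup_S (P(S) − γ·Q(S))` over measurable `S ⊆ ℝⁿ` equals the corresponding supremum
`sup_T (N(‖v‖₂, 1)(T) − γ·N(0,1)(T))` over measurable `T ⊆ ℝ`: the `n`-fold composition
of Gaussian mechanisms with sensitivity indices `v₁, …, vₙ` has the same privacy profile
as a single Gaussian mechanism with sensitivity index `‖v‖₂ = √(v₁² + ⋯ + vₙ²)`, i.e. it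
is `√(v₁² + ⋯ + vₙ²)`-GDP. -/
theorem gaussian_composition_privacy_profile (n : ℕ) (hn : 1 ≤ n) (v : Fin n → ℝ)
    (γ : ℝ) (hγ : 0 ≤ γ) :
    (⨆ S : {S : Set (Fin n → ℝ) // MeasurableSet S},
        ((Measure.pi fun i => gaussianReal (v i) 1) S.1).toReal -
          γ * ((Measure.pi fun _ => gaussianReal 0 1) S.1).toReal) =
      ⨆ T : {T : Set ℝ // MeasurableSet T},
        ((gaussianReal (Real.sqrt (∑ i, v i ^ 2)) 1) T.1).toReal -
          γ * ((gaussianReal 0 1) T.1).toReal :=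
  gaussian_composition_privacy_profile_general n hn v γ
end
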